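/- Let X be the nonsingular projective toric 4-fold whose fan Σ has primitive generators x_1 = (1,0,0,0), x_2 = (0,1,0,0), x_3 = (−1,−1,1,1), x_4 = (0,0,1,0), x_5 = (a,0,−1,0), x_6 = (0,0,0,1), x_7 = (ac+b,0,−c,−1), x_8 = (−1,0,0,0) in N = ℤ^4 and whose primitive collections are {x_1,x_8}, {x_1,x_2,x_3}, {x_4,x_6,x_8}, {x_4,x_5}, {x_6,x_7}, {x_2,x_3,x_5}, {x_2,x_3,x_7}. If (a,b,c) is one of (0,0,0), (1,1,0), (1,0,1), (1,0,0) — giving the nonsingular toric Fano 4-folds of types M_1, M_2, M_3, M_4 respectively — then X admits no totally nondegenerate finite morphism from an abelian surface. -/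

import Mathlib

open Finset

/-- An abelian surface over `ℂ`, recorded abstractly through its group `Div` of
divisor classes modulo algebraic equivalence, the intersection pairing, and the
effectivity and ampleness predicates.  The listed axioms are standard facts
about divisors on an abelian surface. -/
structure AbelianSurface (Div : Type) [AddCommGroup Div] : Type where
  /-- the intersection pairing `D.E` on the abelian surface -/
  inter : Div →+ Div →+ ℤ
  inter_comm : ∀ D E : Div, inter D E = inter E D
  /-- `Effective D` ↔ `D` is the class of a (nonzero or zero) effective divisor -/
  Effective : Div → Prop
  effective_zero : Effective 0
  effective_add : ∀ {D E : Div}, Effective D → Effective E → Effective (D + E)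
  /-- on an abelian surface two effective divisors intersect nonnegatively -/
  inter_nonneg_of_effective : ∀ {D E : Div}, Effective D → Effective E → 0 ≤ inter D E
  /-- `Ample D` ↔ `D` is the class of an ample divisor -/
  Ample : Div → Prop
  /-- on an abelian surface an effective divisor with positive self-intersection is ample -/
  ample_of_effective_of_sq_pos : ∀ {D : Div}, Effective D → 0 < inter D D → Ample D
  /-- an ample divisor meets every nonzero effective divisor positively -/
  inter_pos_of_ample : ∀ {D E : Div}, Ample D → Effective E → E ≠ 0 → 0 < inter D E
  /-- an ample divisor has positive self-intersection -/
  sq_pos_of_ample : ∀ {D : Div}, Ample D → 0 < inter D D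

/-- A complete nonsingular toric 4-fold `X`, presented by the primitive
generators `x_1, …, x_n ∈ N = ℤ⁴` of its fan `Σ` together with the predicate
`IsCone` recording which subsets of the rays span a cone of `Σ`. -/
structure ToricFourfold (n : ℕ) : Type where
  /-- the set `G(Σ)` of primitive generators `x_1, …, x_n` of `Σ` in `N = ℤ⁴` -/
  gen : Fin n → Fin 4 → ℤ
  gen_injective : Function.Injective gen
  /-- `IsCone S` ↔ the rays `{x_i : i ∈ S}` span a cone of `Σ` -/
  IsCone : Finset (Fin n) → Prop
  isCone_empty : IsCone ∅
  isCone_singleton : ∀ i : Fin n, IsCone {i}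
  isCone_mono : ∀ {S T : Finset (Fin n)}, S ⊆ T → IsCone T → IsCone S
  /-- nonsingularity: the generators of each cone form part of a `ℤ`-basis of `N` -/
  nonsingular : ∀ {S : Finset (Fin n)}, IsCone S →
    ∃ b : Module.Basis (Fin 4) ℤ (Fin 4 → ℤ), ∃ ι : {x // x ∈ S} → Fin 4,
      Function.Injective ι ∧ ∀ i : {x // x ∈ S}, gen i.1 = b (ι i)
  /-- completeness: the cones of `Σ` cover `N_ℚ = ℚ⁴` -/
  complete : ∀ v : Fin 4 → ℚ, ∃ S : Finset (Fin n), IsCone S ∧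
    ∃ c : Fin n → ℚ, (∀ i, 0 ≤ c i) ∧ (∀ i, i ∉ S → c i = 0) ∧
      ∀ k, v k = ∑ i, c i * (gen i k : ℚ)

/-- A primitive collection of the fan of `X` (in the sense of Batyrev):
a minimal subset of the set of rays not spanning a cone. -/
def ToricFourfold.IsPrimitiveCollection {n : ℕ} (X : ToricFourfold n)
    (P : Finset (Fin n)) : Prop :=
  ¬ X.IsCone P ∧ ∀ Q : Finset (Fin n), Q ⊂ P → X.IsCone Q

/-- An (equivariant) isomorphism of complete nonsingular toric 4-folds,
i.e. an isomorphism of the corresponding fans. -/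
def ToricFourfold.Iso {m n : ℕ} (X : ToricFourfold m) (Y : ToricFourfold n) : Prop :=
  ∃ (e : Fin m ≃ Fin n) (g : Matrix (Fin 4) (Fin 4) ℤ), IsUnit g.det ∧
    (∀ i, Y.gen (e i) = g.mulVec (X.gen i)) ∧
    ∀ S : Finset (Fin m), X.IsCone S ↔ Y.IsCone (S.image e)

/-- A projective nonsingular toric 4-fold: a complete nonsingular toric 4-fold
together with the predicate recording which `T_N`-invariant divisors
`∑ i, c i • D i` are ample, and (projectivity) an ample effective such divisor. -/
structure ProjToricFourfold (n : ℕ) : Type extends ToricFourfold n where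
  /-- `IsAmple c` ↔ the `T_N`-invariant divisor `∑ i, c i • D i` is ample on `X` -/
  IsAmple : (Fin n → ℤ) → Prop
  /-- projectivity: there is an ample effective `T_N`-invariant divisor -/
  exists_ample : ∃ c : Fin n → ℤ, (∀ i, 0 ≤ c i) ∧ IsAmple c

/-- `X` is Fano: the anticanonical divisor `∑ i, D i` is ample. -/
def ProjToricFourfold.IsFano {n : ℕ} (X : ProjToricFourfold n) : Prop :=
  X.IsAmple fun _ => 1

/-- A totally nondegenerate finite morphism `φ : A → X` from an abelian surface
`A` to a complete nonsingular toric 4-fold `X`, recorded through the pullbacks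
`C i = φ*(D i)` of the `T_N`-invariant prime divisors `D 1, …, D n` of `X`:
total nondegeneracy says that each `D i` meets `φ(A)`, so that each `C i` is a
nonzero effective divisor on `A`. -/
structure TNDMorphism {n : ℕ} (X : ToricFourfold n) {Div : Type} [AddCommGroup Div]
    (A : AbelianSurface Div) : Type where
  /-- the pullbacks `C i = φ*(D i)` -/
  C : Fin n → Div
  effective : ∀ i, A.Effective (C i)
  /-- total nondegeneracy: `D i ∩ φ(A) ≠ ∅`, so `C i` is a nonzero effective divisor -/
  ne_zero : ∀ i, C i ≠ 0
  /-- if `{x i, x j}` spans no cone of `Σ` then `D i ∩ D j = ∅`, hence the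
  pullbacks have intersection number zero -/
  inter_eq_zero : ∀ {i j : Fin n}, i ≠ j → ¬ X.IsCone {i, j} → A.inter (C i) (C j) = 0
  /-- for every `m ∈ M` the pullback of the principal divisor
  `div 𝐞(m) = ∑ i ⟨m, x i⟩ D i` is (algebraically equivalent to) zero -/
  principal_rel : ∀ m : Fin 4 → ℤ, ∑ i, (∑ k, m k * X.gen i k) • C i = 0

/-- A totally nondegenerate finite morphism to a projective nonsingular toric
4-fold; finiteness of `φ` moreover makes pullbacks of ample divisors ample. -/
structure TNDMorphismProj {n : ℕ} (X : ProjToricFourfold n) {Div : Type} [AddCommGroup Div]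
    (A : AbelianSurface Div) : Type extends TNDMorphism X.toToricFourfold A where
  /-- the pullback of an ample divisor under the finite morphism `φ` is ample -/
  pull_ample : ∀ c : Fin n → ℤ, X.IsAmple c → A.Ample (∑ i, c i • C i)

/-- `X` admits a totally nondegenerate finite morphism from an abelian surface. -/
def ProjToricFourfold.HasTND {n : ℕ} (X : ProjToricFourfold n) : Prop :=
  ∃ (Div : Type) (inst : AddCommGroup Div) (A : @AbelianSurface Div inst),
    Nonempty (@TNDMorphismProj n X Div inst A)

/-- A totally nondegenerate embedding `φ : A ↪ X` of an abelian surface into a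
projective nonsingular toric 4-fold: a totally nondegenerate finite morphism
which is a closed embedding.  Besides the finite-morphism data we record the
intersection-theoretic data available for an embedded surface: the quadruple
intersection numbers `quad i j k l = D i · D j · D k · D l` on `X`, the class
`[A] = ∑ k l, aClass k l • (D k · D l)` of `A` in the Chow group `A²(X)`, the
compatibility `(φ*D i)·(φ*D j) = D i · D j · [A]`, and Van de Ven's relation
`c₂(X)·[A] = [A]²` where `c₂(X) = ∑_{i<j} D i · D j` for a nonsingular complete
toric variety. -/
structure TNDEmbedding {n : ℕ} (X : ProjToricFourfold n) {Div : Type} [AddCommGroup Div]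
    (A : AbelianSurface Div) : Type extends TNDMorphismProj X A where
  /-- the intersection numbers `D i · D j · D k · D l` on `X` -/
  quad : Fin n → Fin n → Fin n → Fin n → ℤ
  /-- the coefficients of the class `[A] ∈ A²(X)` in terms of the classes `D k · D l` -/
  aClass : Fin n → Fin n → ℤ
  /-- for the embedded surface `A ⊂ X`, `(φ*D i)·(φ*D j) = D i · D j · [A]` -/
  inter_eq_quad : ∀ i j : Fin n,
    A.inter (C i) (C j) = ∑ k, ∑ l, aClass k l * quad i j k l
  /-- Van de Ven's relation `c₂(X)·[A] = [A]²` -/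
  van_de_ven : ∑ i, ∑ j ∈ Finset.Ioi i, A.inter (C i) (C j) =
    ∑ k, ∑ l, ∑ k', ∑ l', aClass k l * aClass k' l' * quad k l k' l'

/-- `X` admits a totally nondegenerate embedding of an abelian surface. -/
def ProjToricFourfold.HasTNDEmbedding {n : ℕ} (X : ProjToricFourfold n) : Prop :=
  ∃ (Div : Type) (inst : AddCommGroup Div) (A : @AbelianSurface Div inst),
    Nonempty (@TNDEmbedding n X Div inst A)

/-- `ψ : Y → X` is a 2-blow-up: an equivariant blow-up of `X` along a
`T_N`-invariant subvariety of codimension 2.  On fans this is the star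
subdivision of the fan of `X` at a 2-dimensional cone `{x i, x j}`, the new ray
(indexed last) being generated by `x i + x j`. -/
def IsTwoBlowUp {m n : ℕ} (Y : ProjToricFourfold m) (X : ProjToricFourfold n) : Prop :=
  ∃ h : m = n + 1, ∃ i j : Fin n, i ≠ j ∧ X.IsCone {i, j} ∧
    (∀ k : Fin n, Y.gen (finCongr h.symm k.castSucc) = X.gen k) ∧
    Y.gen (finCongr h.symm (Fin.last n)) = X.gen i + X.gen j ∧
    ∀ S : Finset (Fin n),
      (Y.IsCone (S.image fun k => finCongr h.symm k.castSucc) ↔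
        X.IsCone S ∧ ¬ {i, j} ⊆ S) ∧
      (Y.IsCone (insert (finCongr h.symm (Fin.last n))
          (S.image fun k => finCongr h.symm k.castSucc)) ↔
        ¬ {i, j} ⊆ S ∧ X.IsCone (S ∪ {i, j}))

/-- The fan of `X` splits (after a change of coordinates in `N = ℤ⁴`) as the
product of two 2-dimensional complete fans, i.e. `X ≅ X₁ × X₂` for nonsingular
complete toric surfaces `X₁`, `X₂`.  When `X` is moreover Fano, the two factors
are nonsingular toric del Pezzo surfaces. -/
def ProjToricFourfold.IsProductOfSurfaces {n : ℕ} (X : ProjToricFourfold n) : Prop :=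
  ∃ g : Matrix (Fin 4) (Fin 4) ℤ, IsUnit g.det ∧
    ∃ σ : Fin n → Bool,
      (∀ i, σ i = true → g.mulVec (X.gen i) 2 = 0 ∧ g.mulVec (X.gen i) 3 = 0) ∧
      (∀ i, σ i = false → g.mulVec (X.gen i) 0 = 0 ∧ g.mulVec (X.gen i) 1 = 0) ∧
      ∀ S : Finset (Fin n), X.IsCone S ↔
        (X.IsCone (S.filter fun i => σ i = true) ∧ X.IsCone (S.filter fun i => σ i = false))

/-!
Write `C i = φ*(D i)`. For every `m ∈ M` the principal divisor `∑ ⟨m, x i⟩ D i` pulls back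
to zero, which gives linear relations among the `C i`, and the two-element primitive
collections `{x_1, x_8}`, `{x_4, x_5}`, `{x_6, x_7}` give vanishing intersection numbers.
All `C i · C j` are nonnegative, and an effective `D` with `D · E = 0` for some nonzero
effective `E` has `D² = 0`, for otherwise `D` would be ample. In each of the four types
this forces some `C k` to be orthogonal to every `C j`. But the pullback of an ample
divisor of `X` is an ample combination of the `C i` and must meet `C k` positively.
-/

namespace AbelianSurface

variable {Div : Type} [AddCommGroup Div] (A : AbelianSurface Div)

theorem inter_self_eq_zero_of_inter_eq_zero {D E : Div} (hD : A.Effective D)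
    (hE : A.Effective E) (hE₀ : E ≠ 0) (h : A.inter D E = 0) : A.inter D D = 0 := by
  refine (A.inter_nonneg_of_effective hD hD).eq_or_lt.elim Eq.symm fun hpos => ?_
  have := A.inter_pos_of_ample (A.ample_of_effective_of_sq_pos hD hpos) hE hE₀
  omega

end AbelianSurface

namespace TNDMorphism

variable {n : ℕ} {X : ToricFourfold n} {Div : Type} [AddCommGroup Div] {A : AbelianSurface Div}
  (φ : TNDMorphism X A)

theorem inter_nonneg (i j : Fin n) : 0 ≤ A.inter (φ.C i) (φ.C j) :=
  A.inter_nonneg_of_effective (φ.effective i) (φ.effective j)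

theorem inter_eq_zero_of_isPrimitiveCollection {i j : Fin n} (hij : i ≠ j)
    (h : X.IsPrimitiveCollection {i, j}) : A.inter (φ.C i) (φ.C j) = 0 :=
  φ.inter_eq_zero hij h.1

theorem sum_gen_smul_eq_zero (k : Fin 4) : ∑ i, X.gen i k • φ.C i = 0 := by
  simpa [Pi.single_apply] using φ.principal_rel (Pi.single k 1)

end TNDMorphism

theorem TNDMorphismProj.exists_inter_ne_zero {n : ℕ} {X : ProjToricFourfold n} {Div : Type}
    [AddCommGroup Div] {A : AbelianSurface Div} (φ : TNDMorphismProj X A) (k : Fin n) :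
    ∃ j, A.inter (φ.C j) (φ.C k) ≠ 0 := by
  obtain ⟨c, -, hc⟩ := X.exists_ample
  have hpos := A.inter_pos_of_ample (φ.pull_ample c hc) (φ.effective k) (φ.ne_zero k)
  by_contra! h
  simp [map_sum, AddMonoidHom.finsetSum_apply, h] at hpos

def typeMGen (a b c : ℤ) : Fin 8 → Fin 4 → ℤ :=
  ![![1, 0, 0, 0], ![0, 1, 0, 0], ![-1, -1, 1, 1], ![0, 0, 1, 0], ![a, 0, -1, 0],
    ![0, 0, 0, 1], ![a * c + b, 0, -c, -1], ![-1, 0, 0, 0]]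

namespace TNDMorphism

variable {Div : Type} [AddCommGroup Div] {A : AbelianSurface Div} {X : ToricFourfold 8}
  (φ : TNDMorphism X A)

theorem typeM_relations {a b c : ℤ} (hX : X.gen = typeMGen a b c) :
    φ.C 1 = φ.C 2 ∧ φ.C 6 = φ.C 2 + φ.C 5 ∧ φ.C 4 + c • φ.C 6 = φ.C 2 + φ.C 3 ∧
      φ.C 7 + φ.C 2 = φ.C 0 + a • φ.C 4 + (a * c + b) • φ.C 6 := by
  have h0 := φ.sum_gen_smul_eq_zero 0
  have h1 := φ.sum_gen_smul_eq_zero 1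
  have h2 := φ.sum_gen_smul_eq_zero 2
  have h3 := φ.sum_gen_smul_eq_zero 3
  simp only [hX, typeMGen, Fin.sum_univ_eight, Matrix.cons_val, one_smul, zero_smul, neg_smul,
    add_zero, zero_add] at h0 h1 h2 h3
  refine ⟨?_, ?_, ?_, ?_⟩
  · linear_combination (norm := module) h1
  · linear_combination (norm := module) -h3
  · linear_combination (norm := module) -h2
  · linear_combination (norm := module) -h0

theorem inter_two_eq_zero_of_typeM₁ (hX : X.gen = typeMGen 0 0 0)
    (h07 : A.inter (φ.C 0) (φ.C 7) = 0) (h34 : A.inter (φ.C 3) (φ.C 4) = 0)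
    (h56 : A.inter (φ.C 5) (φ.C 6) = 0) (j : Fin 8) : A.inter (φ.C j) (φ.C 2) = 0 := by
  obtain ⟨r1, r6, r4, r7⟩ := φ.typeM_relations hX
  simp only [zero_smul, add_zero, zero_mul] at r4 r7
  have N := φ.inter_nonneg
  rw [r6, map_add] at h56
  obtain ⟨h52, -⟩ := (add_eq_zero_iff_of_nonneg (N 5 2) (N 5 5)).1 h56
  rw [r4, map_add] at h34
  obtain ⟨h32, -⟩ := (add_eq_zero_iff_of_nonneg (N 3 2) (N 3 3)).1 h34
  have h00 := A.inter_self_eq_zero_of_inter_eq_zero (φ.effective 0) (φ.effective 7)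
    (φ.ne_zero 7) h07
  rw [← r7, map_add, AddMonoidHom.add_apply] at h07
  obtain ⟨h77, h27⟩ := (add_eq_zero_iff_of_nonneg (N 7 7) (N 2 7)).1 h07
  have h72 : A.inter (φ.C 7) (φ.C 2) = 0 := A.inter_comm _ _ ▸ h27
  have h22 : A.inter (φ.C 2) (φ.C 2) = 0 := by
    simpa [← r7, h77, h27, h72] using h00
  fin_cases j <;> simp [← r7, r1, r4, r6, h22, h32, h52, h72]

theorem inter_zero_eq_zero_of_typeM₂ (hX : X.gen = typeMGen 1 1 0)
    (h07 : A.inter (φ.C 0) (φ.C 7) = 0) (j : Fin 8) : A.inter (φ.C j) (φ.C 0) = 0 := by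
  obtain ⟨r1, r6, r4, r7⟩ := φ.typeM_relations hX
  simp only [zero_smul, add_zero, one_smul, mul_zero, zero_add] at r4 r7
  have r7' : φ.C 7 = φ.C 0 + φ.C 2 + φ.C 3 + φ.C 5 := by
    linear_combination (norm := module) r7 + r4 + r6
  have N := φ.inter_nonneg
  rw [A.inter_comm, r7'] at h07
  simp only [map_add, AddMonoidHom.add_apply] at h07
  obtain ⟨h00, h20, h30, h50⟩ : A.inter (φ.C 0) (φ.C 0) = 0 ∧ A.inter (φ.C 2) (φ.C 0) = 0 ∧
      A.inter (φ.C 3) (φ.C 0) = 0 ∧ A.inter (φ.C 5) (φ.C 0) = 0 := by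
    refine ⟨?_, ?_, ?_, ?_⟩ <;> linarith [N 0 0, N 2 0, N 3 0, N 5 0]
  fin_cases j <;> simp [r1, r4, r6, r7', h00, h20, h30, h50]

theorem inter_three_eq_zero_of_typeM₃ (hX : X.gen = typeMGen 1 0 1)
    (h07 : A.inter (φ.C 0) (φ.C 7) = 0) (h34 : A.inter (φ.C 3) (φ.C 4) = 0)
    (h56 : A.inter (φ.C 5) (φ.C 6) = 0) (j : Fin 8) : A.inter (φ.C j) (φ.C 3) = 0 := by
  obtain ⟨r1, r6, r4, r7⟩ := φ.typeM_relations hX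
  simp only [one_smul, mul_one, add_zero] at r4 r7
  have r3 : φ.C 3 = φ.C 4 + φ.C 5 := by linear_combination (norm := module) r6 - r4
  have r7' : φ.C 7 = φ.C 0 + φ.C 3 := by linear_combination (norm := module) r7 + r6 - r3
  have N := φ.inter_nonneg
  have h43 : A.inter (φ.C 4) (φ.C 3) = 0 := A.inter_comm _ _ ▸ h34
  rw [r7', map_add] at h07
  obtain ⟨-, h03⟩ := (add_eq_zero_iff_of_nonneg (N 0 0) (N 0 3)).1 h07
  rw [r6, map_add] at h56
  obtain ⟨h52, h55⟩ := (add_eq_zero_iff_of_nonneg (N 5 2) (N 5 5)).1 h56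
  rw [r3, map_add, AddMonoidHom.add_apply] at h34
  obtain ⟨h44, h54⟩ := (add_eq_zero_iff_of_nonneg (N 4 4) (N 5 4)).1 h34
  have h53 : A.inter (φ.C 5) (φ.C 3) = 0 := by simp [r3, h54, h55]
  have h33 : A.inter (φ.C 3) (φ.C 3) = 0 := by
    simp [r3, h44, h54, h55, A.inter_comm (φ.C 4)]
  have h23 : A.inter (φ.C 2) (φ.C 3) = 0 := by
    have := A.inter_self_eq_zero_of_inter_eq_zero
      (A.effective_add (φ.effective 2) (φ.effective 3)) (φ.effective 5) (φ.ne_zero 5)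
      (by simp [A.inter_comm _ (φ.C 5), h52, h53])
    simp only [map_add, AddMonoidHom.add_apply, h33, A.inter_comm (φ.C 3)] at this
    linarith [N 2 2, N 2 3]
  fin_cases j <;> simp [r1, r6, r7', h03, h23, h33, h43, h53]

theorem inter_three_eq_zero_of_typeM₄ (hX : X.gen = typeMGen 1 0 0)
    (h07 : A.inter (φ.C 0) (φ.C 7) = 0) (h34 : A.inter (φ.C 3) (φ.C 4) = 0)
    (h56 : A.inter (φ.C 5) (φ.C 6) = 0) (j : Fin 8) : A.inter (φ.C j) (φ.C 3) = 0 := by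
  obtain ⟨r1, r6, r4, r7⟩ := φ.typeM_relations hX
  simp only [zero_smul, one_smul, mul_zero, add_zero] at r4 r7
  have r7' : φ.C 7 = φ.C 0 + φ.C 3 := by linear_combination (norm := module) r7 + r4
  have N := φ.inter_nonneg
  rw [r7', map_add] at h07
  obtain ⟨-, h03⟩ := (add_eq_zero_iff_of_nonneg (N 0 0) (N 0 3)).1 h07
  rw [r6, map_add] at h56
  obtain ⟨h52, h55⟩ := (add_eq_zero_iff_of_nonneg (N 5 2) (N 5 5)).1 h56
  rw [r4, map_add] at h34
  obtain ⟨h32, h33⟩ := (add_eq_zero_iff_of_nonneg (N 3 2) (N 3 3)).1 h34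
  have h53 : A.inter (φ.C 5) (φ.C 3) = 0 := by
    have := A.inter_self_eq_zero_of_inter_eq_zero
      (A.effective_add (φ.effective 3) (φ.effective 5)) (φ.effective 2) (φ.ne_zero 2)
      (by simp [h32, h52])
    simp only [map_add, AddMonoidHom.add_apply, h33, h55, A.inter_comm (φ.C 3)] at this
    linarith [N 5 3]
  have h23 : A.inter (φ.C 2) (φ.C 3) = 0 := A.inter_comm _ _ ▸ h32
  fin_cases j <;> simp [r1, r4, r6, r7', h03, h23, h33, h53]

end TNDMorphism

/-- **Section 5 (e), types `ℳ`.** Let `X` be the nonsingular projective toric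
4-fold whose fan `Σ` has primitive generators `x_1 = (1,0,0,0)`,
`x_2 = (0,1,0,0)`, `x_3 = (-1,-1,1,1)`, `x_4 = (0,0,1,0)`, `x_5 = (a,0,-1,0)`,
`x_6 = (0,0,0,1)`, `x_7 = (ac+b,0,-c,-1)`, `x_8 = (-1,0,0,0)` in `N = ℤ⁴` and
whose primitive collections are `{x_1,x_8}`, `{x_1,x_2,x_3}`, `{x_4,x_6,x_8}`,
`{x_4,x_5}`, `{x_6,x_7}`, `{x_2,x_3,x_5}`, `{x_2,x_3,x_7}`.  If `(a,b,c)` is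
one of `(0,0,0)`, `(1,1,0)`, `(1,0,1)`, `(1,0,0)` — giving the nonsingular
toric Fano 4-folds of types `ℳ₁`, `ℳ₂`, `ℳ₃`, `ℳ₄` respectively — then `X`
admits no totally nondegenerate finite morphism from an abelian surface.
Rays are indexed from `0`, so `x_k` is `X.gen (k-1)`. -/
theorem no_tnd_morphism_typeM (a b c : ℤ) (X : ProjToricFourfold 8)
    (hg0 : X.gen 0 = ![1, 0, 0, 0]) (hg1 : X.gen 1 = ![0, 1, 0, 0])
    (hg2 : X.gen 2 = ![-1, -1, 1, 1]) (hg3 : X.gen 3 = ![0, 0, 1, 0])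
    (hg4 : X.gen 4 = ![a, 0, -1, 0]) (hg5 : X.gen 5 = ![0, 0, 0, 1])
    (hg6 : X.gen 6 = ![a * c + b, 0, -c, -1]) (hg7 : X.gen 7 = ![-1, 0, 0, 0])
    (hPC : ∀ P : Finset (Fin 8), X.toToricFourfold.IsPrimitiveCollection P ↔
      (P = {0, 7} ∨ P = {0, 1, 2} ∨ P = {3, 5, 7} ∨ P = {3, 4} ∨ P = {5, 6} ∨
        P = {1, 2, 4} ∨ P = {1, 2, 6}))
    (habc : (a, b, c) = (0, 0, 0) ∨ (a, b, c) = (1, 1, 0) ∨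
      (a, b, c) = (1, 0, 1) ∨ (a, b, c) = (1, 0, 0)) :
    ¬ X.HasTND := by
  rintro ⟨Div, _, A, ⟨φ⟩⟩
  have hX : X.gen = typeMGen a b c := by
    funext i
    fin_cases i <;> simp [typeMGen, *]
  have h07 := φ.inter_eq_zero_of_isPrimitiveCollection (by decide) ((hPC {0, 7}).2 (by simp))
  have h34 := φ.inter_eq_zero_of_isPrimitiveCollection (by decide) ((hPC {3, 4}).2 (by simp))
  have h56 := φ.inter_eq_zero_of_isPrimitiveCollection (by decide) ((hPC {5, 6}).2 (by simp))
  obtain ⟨k, hk⟩ : ∃ k, ∀ j, A.inter (φ.C j) (φ.C k) = 0 := by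
    rcases habc with h | h | h | h <;> simp only [Prod.mk.injEq] at h <;>
      obtain ⟨rfl, rfl, rfl⟩ := h
    exacts [⟨2, φ.inter_two_eq_zero_of_typeM₁ hX h07 h34 h56⟩,
      ⟨0, φ.inter_zero_eq_zero_of_typeM₂ hX h07⟩,
      ⟨3, φ.inter_three_eq_zero_of_typeM₃ hX h07 h34 h56⟩,
      ⟨3, φ.inter_three_eq_zero_of_typeM₄ hX h07 h34 h56⟩]
  obtain ⟨j, hj⟩ := φ.exists_inter_ne_zero k
  exact hj (hk j)
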